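/- arXiv:2103.16659 — 2 statements merged into one kernel-verified Lean document; each statement's English description precedes it below -/
import Mathlib

section
/- Let f be C² with L-Lipschitz Hessian, and suppose at x the step d satisfies ∇f(x) + (∇²f(x) + λI)d = r with λ ≤ β‖d‖/α, ‖r‖ ≤ ξ‖d‖², for constants β ≥ 1, α > 0, ξ > 0. Then ‖∇f(x+d)‖ ≤ (L/2 + β/α + ξ)‖d‖². -/
/-! The Hessian is `L`-Lipschitz, so the first-order Taylor remainder of the gradient along `d`
is at most `L/2 ‖d‖²`. The Newton-type equation rewrites `∇f(x + d)` as that remainder plus the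
residual `r` minus the shift `λ d`, and the two hypotheses bound the last two terms by `ξ ‖d‖²`
and `β/α ‖d‖²`. -/

open scoped RealInnerProductSpace

open Set

theorem ContDiff.gradient {E : Type*} [NormedAddCommGroup E] [InnerProductSpace ℝ E]
    [CompleteSpace E] {f : E → ℝ} {n : WithTop ℕ∞} (hf : ContDiff ℝ (n + 1) f) :
    ContDiff ℝ n (gradient f) :=
  (InnerProductSpace.toDual ℝ E).symm.contDiff.comp (hf.fderiv_right le_rfl)

section TaylorRemainder

variable {E F : Type*} [NormedAddCommGroup E] [NormedSpace ℝ E]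
  [NormedAddCommGroup F] [NormedSpace ℝ F]

/-- Fencing argument: `t ↦ g (x + t • d) - g x - t • g' x d` vanishes at `0` and its derivative
has norm at most `L t ‖d‖²`, the derivative of the boundary function `L/2 t² ‖d‖²`. -/
theorem norm_add_sub_sub_fderiv_le {g : E → F} (hg : Differentiable ℝ g) {x : E} {L : ℝ}
    (hLip : ∀ y, ‖fderiv ℝ g y - fderiv ℝ g x‖ ≤ L * ‖y - x‖) (d : E) :
    ‖g (x + d) - g x - fderiv ℝ g x d‖ ≤ L / 2 * ‖d‖ ^ 2 := by
  set φ : ℝ → F := fun t => g (x + t • d) - g x - t • fderiv ℝ g x d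
  have hφ : ∀ t, HasDerivAt φ (fderiv ℝ g (x + t • d) d - fderiv ℝ g x d) t := by
    intro t
    have hline : HasDerivAt (fun t : ℝ => x + t • d) d t := by
      simpa using ((hasDerivAt_id t).smul_const d).const_add x
    have hlin : HasDerivAt (fun t : ℝ => t • fderiv ℝ g x d) (fderiv ℝ g x d) t := by
      simpa using (hasDerivAt_id t).smul_const (fderiv ℝ g x d)
    exact (((hg _).hasFDerivAt.comp_hasDerivAt t hline).sub_const (g x)).sub hlin
  have hB : ∀ t : ℝ, HasDerivAt (fun t => L / 2 * t ^ 2 * ‖d‖ ^ 2) (L * t * ‖d‖ ^ 2) t := by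
    intro t
    exact (((hasDerivAt_pow 2 t).const_mul (L / 2)).mul_const (‖d‖ ^ 2)).congr_deriv (by ring)
  have bound : ∀ t ∈ Ico (0 : ℝ) 1,
      ‖fderiv ℝ g (x + t • d) d - fderiv ℝ g x d‖ ≤ L * t * ‖d‖ ^ 2 := by
    rintro t ⟨ht, -⟩
    calc ‖fderiv ℝ g (x + t • d) d - fderiv ℝ g x d‖
        = ‖(fderiv ℝ g (x + t • d) - fderiv ℝ g x) d‖ := rfl
      _ ≤ ‖fderiv ℝ g (x + t • d) - fderiv ℝ g x‖ * ‖d‖ := ContinuousLinearMap.le_opNorm _ _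
      _ ≤ L * ‖x + t • d - x‖ * ‖d‖ := by gcongr; exact hLip _
      _ = L * t * ‖d‖ ^ 2 := by
        rw [add_sub_cancel_left, norm_smul, Real.norm_of_nonneg ht]; ring
  have key := image_norm_le_of_norm_deriv_right_le_deriv_boundary
    (fun t _ => (hφ t).continuousAt.continuousWithinAt) (fun t _ => (hφ t).hasDerivWithinAt)
    (by simp [φ]) hB bound (right_mem_Icc.2 zero_le_one)
  simpa [φ] using key

end TaylorRemainder

theorem stmt4_general (n : ℕ) (f : EuclideanSpace ℝ (Fin n) → ℝ) (L : ℝ)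
    (hf : ContDiff ℝ 2 f)
    (hLip : ∀ y z : EuclideanSpace ℝ (Fin n),
      ‖fderiv ℝ (gradient f) y - fderiv ℝ (gradient f) z‖ ≤ L * ‖y - z‖)
    (x d r : EuclideanSpace ℝ (Fin n)) (lam β α ξ : ℝ)
    (hlam : 0 ≤ lam)
    (heq : gradient f x + (fderiv ℝ (gradient f) x d + lam • d) = r)
    (hshift : lam ≤ β * ‖d‖ / α)
    (hres : ‖r‖ ≤ ξ * ‖d‖^2) :
    ‖gradient f (x + d)‖ ≤ (L/2 + β/α + ξ) * ‖d‖^2 := by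
  have htaylor : ‖gradient f (x + d) - gradient f x - fderiv ℝ (gradient f) x d‖ ≤
      L / 2 * ‖d‖ ^ 2 :=
    norm_add_sub_sub_fderiv_le ((hf.gradient (n := 1)).differentiable one_ne_zero)
      (fun y => hLip y x) d
  have hshift' : ‖lam • d‖ ≤ β / α * ‖d‖ ^ 2 := by
    rw [norm_smul, Real.norm_of_nonneg hlam]
    calc lam * ‖d‖ ≤ β * ‖d‖ / α * ‖d‖ := by gcongr
      _ = β / α * ‖d‖ ^ 2 := by ring
  have hsplit : gradient f (x + d) =
      (gradient f (x + d) - gradient f x - fderiv ℝ (gradient f) x d) + r - lam • d := by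
    rw [← heq]; abel
  calc ‖gradient f (x + d)‖
      ≤ ‖gradient f (x + d) - gradient f x - fderiv ℝ (gradient f) x d‖ + ‖r‖ + ‖lam • d‖ := by
        nth_rewrite 1 [hsplit]; exact norm_sub_le_of_le (norm_add_le _ _) le_rfl
    _ ≤ L / 2 * ‖d‖ ^ 2 + ξ * ‖d‖ ^ 2 + β / α * ‖d‖ ^ 2 := by gcongr
    _ = (L/2 + β/α + ξ) * ‖d‖^2 := by ring

theorem stmt4 (n : ℕ) (f : EuclideanSpace ℝ (Fin n) → ℝ) (L : ℝ) (hL : 0 < L)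
    (hf : ContDiff ℝ 2 f)
    (hLip : ∀ y z : EuclideanSpace ℝ (Fin n),
      ‖fderiv ℝ (gradient f) y - fderiv ℝ (gradient f) z‖ ≤ L * ‖y - z‖)
    (x d r : EuclideanSpace ℝ (Fin n)) (lam β α ξ : ℝ)
    (hlam : 0 ≤ lam) (hβ : 1 ≤ β) (hα : 0 < α) (hξ : 0 < ξ)
    (heq : gradient f x + (fderiv ℝ (gradient f) x d + lam • d) = r)
    (hshift : lam ≤ β * ‖d‖ / α)
    (hres : ‖r‖ ≤ ξ * ‖d‖^2) :
    ‖gradient f (x + d)‖ ≤ (L/2 + β/α + ξ) * ‖d‖^2 :=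
  stmt4_general n f L hf hLip x d r lam β α ξ hlam heq hshift hres
end

section
/- Let f be C² with L-Lipschitz Hessian, B a symmetric matrix approximating ∇²f(x) such that ‖(∇²f(x) - B)d‖ ≤ C_H‖d‖^{1+ζ}, and suppose ∇f(x) + (B + λI)d = r with λ ≤ β‖d‖/α and ‖r‖ ≤ ξ‖d‖^{1+ζ}. Then ‖∇f(x+d)‖ ≤ (L/2 + β/α)‖d‖² + (C_H + ξ)‖d‖^{1+ζ}. -/
/-!
Write `∇f(x + d) = [∇f(x + d) - ∇f(x) - ∇²f(x) d] + (∇²f(x) - B) d + r - λ d`, using the Newton-type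
equation for `∇f(x)`. The first bracket is the Taylor remainder of `∇f`, at most `L/2 ‖d‖²` because
`∇²f` is `L`-Lipschitz; the other three terms are bounded by `C_H ‖d‖^{1+ζ}`, `ξ ‖d‖^{1+ζ}` and
`λ ‖d‖ ≤ β/α ‖d‖²`.
-/

section TaylorRemainder

variable {E F : Type*} [NormedAddCommGroup E] [NormedSpace ℝ E]
  [NormedAddCommGroup F] [NormedSpace ℝ F]

lemma norm_fderiv_add_smul_apply_sub_le {g : E → F} {L : ℝ}
    (hLip : ∀ y z, ‖fderiv ℝ g y - fderiv ℝ g z‖ ≤ L * ‖y - z‖) (x d : E) {t : ℝ} (ht : 0 ≤ t) :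
    ‖fderiv ℝ g (x + t • d) d - fderiv ℝ g x d‖ ≤ L * ‖d‖ ^ 2 * t :=
  calc ‖fderiv ℝ g (x + t • d) d - fderiv ℝ g x d‖
      = ‖(fderiv ℝ g (x + t • d) - fderiv ℝ g x) d‖ := rfl
    _ ≤ ‖fderiv ℝ g (x + t • d) - fderiv ℝ g x‖ * ‖d‖ := ContinuousLinearMap.le_opNorm _ d
    _ ≤ L * ‖x + t • d - x‖ * ‖d‖ := by gcongr; exact hLip _ _
    _ = L * ‖d‖ ^ 2 * t := by
      rw [add_sub_cancel_left, norm_smul, Real.norm_of_nonneg ht]; ring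

lemma norm_sub_sub_fderiv_le_of_lipschitz_fderiv {g : E → F} (hg : Differentiable ℝ g) {L : ℝ}
    (hLip : ∀ y z, ‖fderiv ℝ g y - fderiv ℝ g z‖ ≤ L * ‖y - z‖) (x d : E) :
    ‖g (x + d) - g x - fderiv ℝ g x d‖ ≤ L / 2 * ‖d‖ ^ 2 := by
  set v := fderiv ℝ g x d
  have hremainder : ∀ t : ℝ, HasDerivAt (fun t : ℝ => g (x + t • d) - g x - t • v)
      (fderiv ℝ g (x + t • d) d - v) t := by
    intro t
    have hline : HasDerivAt (fun t : ℝ => x + t • d) d t := by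
      simpa using ((hasDerivAt_id t).smul_const d).const_add x
    have h := (((hg _).hasFDerivAt.comp_hasDerivAt t hline).sub_const (g x)).sub
      ((hasDerivAt_id t).smul_const v)
    rwa [one_smul] at h
  have hbound : ∀ t : ℝ, HasDerivAt (fun t => L * ‖d‖ ^ 2 * (t ^ 2 / 2)) (L * ‖d‖ ^ 2 * t) t :=
    fun t => by simpa using ((hasDerivAt_pow 2 t).div_const 2).const_mul (L * ‖d‖ ^ 2)
  have hfence := image_norm_le_of_norm_deriv_right_le_deriv_boundary
    (fun t _ => (hremainder t).continuousAt.continuousWithinAt)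
    (fun t _ => (hremainder t).hasDerivWithinAt) (by simp) hbound
    (fun t ht => norm_fderiv_add_smul_apply_sub_le hLip x d ht.1) (Set.right_mem_Icc.2 zero_le_one)
  simpa using hfence.trans_eq (by ring)

end TaylorRemainder

lemma differentiable_gradient_of_contDiff_two {F : Type*} [NormedAddCommGroup F]
    [InnerProductSpace ℝ F] [CompleteSpace F] {f : F → ℝ} (hf : ContDiff ℝ 2 f) :
    Differentiable ℝ (gradient f) :=
  ((InnerProductSpace.toDual ℝ F).symm.contDiff.comp
    (hf.fderiv_right (m := 1) (by norm_num))).differentiable one_ne_zero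

theorem stmt17_general (n : ℕ) (f : EuclideanSpace ℝ (Fin n) → ℝ) (L : ℝ)
    (hf : ContDiff ℝ 2 f)
    (hLip : ∀ y z : EuclideanSpace ℝ (Fin n),
      ‖fderiv ℝ (gradient f) y - fderiv ℝ (gradient f) z‖ ≤ L * ‖y - z‖)
    (B : EuclideanSpace ℝ (Fin n) →L[ℝ] EuclideanSpace ℝ (Fin n))
    (x d r : EuclideanSpace ℝ (Fin n)) (lam β α ξ CH ζ : ℝ)
    (hlam : 0 ≤ lam)
    (hBd : ‖fderiv ℝ (gradient f) x d - B d‖ ≤ CH * ‖d‖ ^ (1 + ζ))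
    (heq : gradient f x + (B d + lam • d) = r)
    (hshift : lam ≤ β * ‖d‖ / α)
    (hres : ‖r‖ ≤ ξ * ‖d‖ ^ (1 + ζ)) :
    ‖gradient f (x + d)‖ ≤ (L/2 + β/α) * ‖d‖^2 + (CH + ξ) * ‖d‖ ^ (1 + ζ) := by
  have htaylor := norm_sub_sub_fderiv_le_of_lipschitz_fderiv
    (differentiable_gradient_of_contDiff_two hf) hLip x d
  have hshift_term : ‖lam • d‖ ≤ β / α * ‖d‖ ^ 2 :=
    calc ‖lam • d‖ = lam * ‖d‖ := by rw [norm_smul, Real.norm_of_nonneg hlam]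
      _ ≤ β * ‖d‖ / α * ‖d‖ := by gcongr
      _ = β / α * ‖d‖ ^ 2 := by ring
  have hdecomp : gradient f (x + d) =
      (gradient f (x + d) - gradient f x - fderiv ℝ (gradient f) x d)
      + (fderiv ℝ (gradient f) x d - B d) + r - lam • d := by
    rw [← heq]; abel
  calc ‖gradient f (x + d)‖
      ≤ ‖gradient f (x + d) - gradient f x - fderiv ℝ (gradient f) x d‖
        + ‖fderiv ℝ (gradient f) x d - B d‖ + ‖r‖ + ‖lam • d‖ := by
        conv_lhs => rw [hdecomp]
        exact (norm_sub_le _ _).trans (add_le_add norm_add₃_le le_rfl)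
    _ ≤ L / 2 * ‖d‖ ^ 2 + CH * ‖d‖ ^ (1 + ζ) + ξ * ‖d‖ ^ (1 + ζ) + β / α * ‖d‖ ^ 2 := by
        gcongr
    _ = (L/2 + β/α) * ‖d‖^2 + (CH + ξ) * ‖d‖ ^ (1 + ζ) := by ring

theorem stmt17 (n : ℕ) (f : EuclideanSpace ℝ (Fin n) → ℝ) (L : ℝ) (hL : 0 < L)
    (hf : ContDiff ℝ 2 f)
    (hLip : ∀ y z : EuclideanSpace ℝ (Fin n),
      ‖fderiv ℝ (gradient f) y - fderiv ℝ (gradient f) z‖ ≤ L * ‖y - z‖)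
    (B : EuclideanSpace ℝ (Fin n) →L[ℝ] EuclideanSpace ℝ (Fin n))
    (hB : IsSelfAdjoint B)
    (x d r : EuclideanSpace ℝ (Fin n)) (lam β α ξ CH ζ : ℝ)
    (hlam : 0 ≤ lam) (hβ : 1 ≤ β) (hα : 0 < α) (hξ : 0 < ξ) (hCH : 0 < CH)
    (hζ : 0 < ζ) (hζ1 : ζ ≤ 1)
    (hBd : ‖fderiv ℝ (gradient f) x d - B d‖ ≤ CH * ‖d‖ ^ (1 + ζ))
    (heq : gradient f x + (B d + lam • d) = r)
    (hshift : lam ≤ β * ‖d‖ / α)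
    (hres : ‖r‖ ≤ ξ * ‖d‖ ^ (1 + ζ)) :
    ‖gradient f (x + d)‖ ≤ (L/2 + β/α) * ‖d‖^2 + (CH + ξ) * ‖d‖ ^ (1 + ζ) :=
  stmt17_general n f L hf hLip B x d r lam β α ξ CH ζ hlam hBd heq hshift hres
end
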